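/- Let G be a graph of conductance Φ_G with n vertices and let T* be an optimal HC tree of G whose dense branch is (A_0, ..., A_k). If |A_k| ≥ (n-1)/2, then for every HC tree T of G, cost_G(T) ≤ 8 · cost_G(T*)/Φ_G. -/

import Mathlib

open Finset

/-- A hierarchical clustering (HC) tree: a binary tree with vertex-labelled leaves. -/
inductive HCTree (V : Type) where
  | leaf (v : V) : HCTree V
  | node (l r : HCTree V) : HCTree V

namespace HCTree

variable {V : Type} [Fintype V] [DecidableEq V]

/-- The list of leaf labels of an HC tree. -/
def leafList : HCTree V → List V
  | leaf v => [v]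
  | node l r => leafList l ++ leafList r

/-- The set of leaves of an HC tree. -/
def leaves (t : HCTree V) : Finset V := t.leafList.toFinset

/-- Total weight of (ordered) pairs between two vertex sets:
`w(S,T) = ∑_{u ∈ S, v ∈ T} w(u,v)`. -/
def cut (w : V → V → ℝ) (S T : Finset V) : ℝ := ∑ u ∈ S, ∑ v ∈ T, w u v

/-- The (weighted) degree of a vertex: `d_u = ∑_v w(u,v)`. -/
def deg (w : V → V → ℝ) (u : V) : ℝ := ∑ v, w u v

/-- The volume of a vertex set: `vol(S) = ∑_{u ∈ S} d_u`. -/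
def vol (w : V → V → ℝ) (S : Finset V) : ℝ := ∑ u ∈ S, deg w u

/-- Dasgupta's cost of an HC tree, via the equivalent internal-node formula:
`cost(T) = ∑_{N → (N₁,N₂)} |leaves(T[N])| · w(leaves(N₁), leaves(N₂))`. -/
def cost (w : V → V → ℝ) : HCTree V → ℝ
  | leaf _ => 0
  | node l r =>
      ((leaves (node l r)).card : ℝ) * cut w (leaves l) (leaves r)
        + cost w l + cost w r

/-- `t` is an HC tree of the graph on vertex set `V`: its leaves are distinct
and are exactly the vertices of `V`. -/
def isHC (t : HCTree V) : Prop := t.leafList.Nodup ∧ t.leaves = Finset.univ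

end HCTree

namespace HCTree

variable {V : Type} [Fintype V] [DecidableEq V]

/-- `DenseBranch w t k A B` says that `(A 0, …, A k)` is the dense branch of the HC tree `t`,
with `B (i+1)` the sibling of `A (i+1)`: `A 0` is the root, each `A (i+1)` is the child of
`A i` of higher volume, every node on the branch has volume greater than `vol(G)/2`,
and both children of the final node `A k` have volume at most `vol(G)/2`. -/
def DenseBranch (w : V → V → ℝ) (t : HCTree V) (k : ℕ)
    (A B : ℕ → HCTree V) : Prop :=
  A 0 = t ∧
  (∀ i < k,
      (A i = HCTree.node (A (i+1)) (B (i+1)) ∨ A i = HCTree.node (B (i+1)) (A (i+1))) ∧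
      vol w (leaves (B (i+1))) ≤ vol w (leaves (A (i+1)))) ∧
  (∀ i ≤ k, vol w (Finset.univ : Finset V) / 2 < vol w (leaves (A i))) ∧
  (∃ l r, A k = HCTree.node l r ∧
      vol w (leaves l) ≤ vol w (Finset.univ : Finset V) / 2 ∧
      vol w (leaves r) ≤ vol w (Finset.univ : Finset V) / 2)

end HCTree

/-!
Every tree costs at most `n · vol(G) / 2`, since each weighted pair is separated once, at a node
with at most `n` leaves. For the lower bound, every edge leaving `A_k`, as well as every edge
between the two children `L, R` of `A_k`, is separated at a node with at least `|A_k|` leaves,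
so `cost(T*) ≥ |A_k| (w(A_k, A_kᶜ) + w(L, R))`. Both children have volume at most `vol(G)/2`,
so conductance bounds their two cuts, whose sum is `w(A_k, A_kᶜ) + 2 w(L, R) ≥ Φ vol(A_k)`.
Hence `cost(T*) ≥ (Φ/2) |A_k| vol(A_k) ≥ Φ n vol(G) / 16`, using `vol(A_k) > vol(G)/2` and
`n ≤ 2|A_k| + 1 ≤ 4|A_k|`.
-/

namespace HCTree

variable {V : Type}

inductive IsSubtree : HCTree V → HCTree V → Prop
  | refl (t : HCTree V) : IsSubtree t t
  | left {s l : HCTree V} (r : HCTree V) : IsSubtree s l → IsSubtree s (node l r)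
  | right {s r : HCTree V} (l : HCTree V) : IsSubtree s r → IsSubtree s (node l r)

theorem IsSubtree.trans {a b c : HCTree V} (hab : IsSubtree a b) (hbc : IsSubtree b c) :
    IsSubtree a c := by
  induction hbc with
  | refl => exact hab
  | left r _ ih => exact .left r ih
  | right l _ ih => exact .right l ih

theorem IsSubtree.nodup {s t : HCTree V} (hs : IsSubtree s t) (ht : t.leafList.Nodup) :
    s.leafList.Nodup := by
  induction hs with
  | refl => exact ht
  | left r _ ih => exact ih (List.nodup_append.mp ht).1
  | right l _ ih => exact ih (List.nodup_append.mp ht).2.1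

section Cut

variable (w : V → V → ℝ)

theorem cut_nonneg (hw : ∀ u v, 0 ≤ w u v) (S T : Finset V) : 0 ≤ cut w S T :=
  Finset.sum_nonneg fun _ _ => Finset.sum_nonneg fun _ _ => hw _ _

theorem cut_comm (hsymm : ∀ u v, w u v = w v u) (S T : Finset V) :
    cut w S T = cut w T S := by
  rw [cut, Finset.sum_comm]
  exact Finset.sum_congr rfl fun _ _ => Finset.sum_congr rfl fun _ _ => hsymm _ _

theorem cut_mono_left (hw : ∀ u v, 0 ≤ w u v) {S S' : Finset V} (h : S ⊆ S') (T : Finset V) :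
    cut w S T ≤ cut w S' T :=
  Finset.sum_le_sum_of_subset_of_nonneg h fun _ _ _ => Finset.sum_nonneg fun _ _ => hw _ _

end Cut

variable [DecidableEq V]

theorem leaves_node (l r : HCTree V) : leaves (node l r) = leaves l ∪ leaves r := by
  simp [leaves, leafList]

theorem leaves_nonempty (t : HCTree V) : t.leaves.Nonempty := by
  induction t with
  | leaf v => simp [leaves, leafList]
  | node l r ihl _ => rw [leaves_node]; exact ihl.mono Finset.subset_union_left

theorem disjoint_leaves_of_nodup_node {l r : HCTree V} (h : (node l r).leafList.Nodup) :
    Disjoint l.leaves r.leaves := by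
  rw [leafList, List.nodup_append] at h
  exact List.disjoint_toFinset_iff_disjoint.mpr fun a ha hb => h.2.2 a ha a hb rfl

theorem IsSubtree.leaves_subset {s t : HCTree V} (hs : IsSubtree s t) :
    s.leaves ⊆ t.leaves := by
  induction hs with
  | refl => exact subset_rfl
  | left r _ ih => exact ih.trans (leaves_node _ r ▸ Finset.subset_union_left)
  | right l _ ih => exact ih.trans (leaves_node l _ ▸ Finset.subset_union_right)

variable (w : V → V → ℝ)

theorem cut_union_left {S₁ S₂ : Finset V} (h : Disjoint S₁ S₂) (T : Finset V) :
    cut w (S₁ ∪ S₂) T = cut w S₁ T + cut w S₂ T :=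
  Finset.sum_union h

theorem cut_union_right (S : Finset V) {T₁ T₂ : Finset V} (h : Disjoint T₁ T₂) :
    cut w S (T₁ ∪ T₂) = cut w S T₁ + cut w S T₂ := by
  simp only [cut, ← Finset.sum_add_distrib]
  exact Finset.sum_congr rfl fun _ _ => Finset.sum_union h

theorem cut_union_self (hsymm : ∀ u v, w u v = w v u) {S T : Finset V} (h : Disjoint S T) :
    cut w (S ∪ T) (S ∪ T) = cut w S S + cut w T T + 2 * cut w S T := by
  rw [cut_union_left w h, cut_union_right w _ h, cut_union_right w _ h, cut_comm w hsymm T S]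
  ring

/-- When a node with leaves `X ∪ Y` has children with leaves `X ⊇ S` and `Y`, the weight from `S`
to `Y` is paid at that node, whose term in the cost dominates `|S| · w(S, Y)`. -/
theorem card_mul_cut_sdiff_union_le (hw : ∀ u v, 0 ≤ w u v) {S X Y : Finset V}
    (hSX : S ⊆ X) (hXY : Disjoint X Y) :
    (S.card : ℝ) * cut w S ((X ∪ Y) \ S)
      ≤ (S.card : ℝ) * cut w S (X \ S) + ((X ∪ Y).card : ℝ) * cut w X Y := by
  have hsplit : (X ∪ Y) \ S = X \ S ∪ Y := by
    rw [Finset.union_sdiff_distrib,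
      Finset.sdiff_eq_self_of_disjoint (hXY.symm.mono_right hSX)]
  have hcard : (S.card : ℝ) ≤ ((X ∪ Y).card : ℝ) := by
    exact_mod_cast Finset.card_le_card (hSX.trans Finset.subset_union_left)
  rw [hsplit, cut_union_right w _ (hXY.mono_left Finset.sdiff_subset), mul_add]
  gcongr
  · exact cut_nonneg w hw _ _
  · exact cut_mono_left w hw hSX Y

variable {w : V → V → ℝ}

theorem cost_nonneg (hw : ∀ u v, 0 ≤ w u v) (t : HCTree V) : 0 ≤ cost w t := by
  induction t with
  | leaf v => simp [cost]
  | node l r ihl ihr =>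
    have := cut_nonneg w hw l.leaves r.leaves
    simp only [cost]
    positivity

theorem cost_le_card_mul_cut_div_two (hw : ∀ u v, 0 ≤ w u v) (hsymm : ∀ u v, w u v = w v u)
    {t : HCTree V} (ht : t.leafList.Nodup) :
    cost w t ≤ (t.leaves.card : ℝ) * cut w t.leaves t.leaves / 2 := by
  induction t with
  | leaf v =>
    have := hw v v
    simp only [cost, leaves, leafList, cut, List.toFinset_cons, List.toFinset_nil,
      insert_empty_eq, Finset.sum_singleton]
    positivity
  | node l r ihl ihr =>
    obtain ⟨hl, hr, -⟩ := List.nodup_append.mp ht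
    have hd := disjoint_leaves_of_nodup_node ht
    have hcl : (l.leaves.card : ℝ) * cut w l.leaves l.leaves
        ≤ ((node l r).leaves.card : ℝ) * cut w l.leaves l.leaves := by
      gcongr
      · exact cut_nonneg w hw _ _
      · exact leaves_node l r ▸ Finset.subset_union_left
    have hcr : (r.leaves.card : ℝ) * cut w r.leaves r.leaves
        ≤ ((node l r).leaves.card : ℝ) * cut w r.leaves r.leaves := by
      gcongr
      · exact cut_nonneg w hw _ _
      · exact leaves_node l r ▸ Finset.subset_union_right
    have := ihl hl
    have := ihr hr
    have hexp : cut w (node l r).leaves (node l r).leaves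
        = cut w l.leaves l.leaves + cut w r.leaves r.leaves + 2 * cut w l.leaves r.leaves := by
      rw [leaves_node]; exact cut_union_self w hsymm hd
    rw [cost, hexp]
    linarith

variable [Fintype V]

theorem DenseBranch.isSubtree {t : HCTree V} {k : ℕ} {A B : ℕ → HCTree V}
    (hdb : DenseBranch w t k A B) : IsSubtree (A k) t := by
  suffices ∀ i ≤ k, IsSubtree (A i) t from this k le_rfl
  intro i hi
  induction i with
  | zero => exact hdb.1 ▸ .refl t
  | succ i ih =>
    have hchild : IsSubtree (A (i + 1)) (A i) := by
      rcases (hdb.2.1 i hi).1 with h | h <;> rw [h]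
      exacts [.left _ (.refl _), .right _ (.refl _)]
    exact hchild.trans (ih (Nat.le_of_succ_le hi))

variable (w) in
theorem cut_compl_add_cut_compl (hsymm : ∀ u v, w u v = w v u) {S T : Finset V}
    (h : Disjoint S T) :
    cut w S Sᶜ + cut w T Tᶜ = cut w (S ∪ T) (S ∪ T)ᶜ + 2 * cut w S T := by
  have hS : Sᶜ = T ∪ (S ∪ T)ᶜ := by
    ext x; simp only [Finset.mem_compl, Finset.mem_union]; have := Finset.disjoint_left.mp h; tauto
  have hT : Tᶜ = S ∪ (S ∪ T)ᶜ := by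
    ext x; simp only [Finset.mem_compl, Finset.mem_union]; have := Finset.disjoint_left.mp h; tauto
  rw [hS, hT, cut_union_right w _ (Finset.disjoint_union_left.mp disjoint_compl_right).2,
    cut_union_right w _ (Finset.disjoint_union_left.mp disjoint_compl_right).1,
    cut_union_left w h, cut_comm w hsymm T S]
  ring

theorem cost_le_card_mul_vol_div_two (hw : ∀ u v, 0 ≤ w u v) (hsymm : ∀ u v, w u v = w v u)
    {t : HCTree V} (ht : isHC t) :
    cost w t ≤ (Fintype.card V : ℝ) * vol w Finset.univ / 2 := by
  have := cost_le_card_mul_cut_div_two hw hsymm ht.1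
  rwa [ht.2, Finset.card_univ] at this

theorem cost_add_card_mul_cut_sdiff_le (hw : ∀ u v, 0 ≤ w u v) (hsymm : ∀ u v, w u v = w v u)
    {s t : HCTree V} (hs : IsSubtree s t) (ht : t.leafList.Nodup) :
    cost w s + (s.leaves.card : ℝ) * cut w s.leaves (t.leaves \ s.leaves) ≤ cost w t := by
  induction hs with
  | refl => simp [cut]
  | left r hsl ih =>
    have := card_mul_cut_sdiff_union_le w hw hsl.leaves_subset (disjoint_leaves_of_nodup_node ht)
    have := ih (List.nodup_append.mp ht).1
    have := cost_nonneg hw r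
    rw [cost, leaves_node]
    linarith
  | right l hsr ih =>
    have := card_mul_cut_sdiff_union_le w hw hsr.leaves_subset
      (disjoint_leaves_of_nodup_node ht).symm
    have := ih (List.nodup_append.mp ht).2.1
    have := cost_nonneg hw l
    rw [cost, leaves_node, Finset.union_comm, cut_comm w hsymm l.leaves]
    linarith

theorem conductance_mul_card_mul_vol_le_two_mul_cost (hw : ∀ u v, 0 ≤ w u v)
    (hsymm : ∀ u v, w u v = w v u) {Φ : ℝ}
    (hΦ : ∀ S : Finset V, S.Nonempty → vol w S ≤ vol w (Finset.univ : Finset V) / 2 →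
      Φ * vol w S ≤ cut w S Sᶜ)
    {t l r : HCTree V} (ht : isHC t) (hs : IsSubtree (node l r) t)
    (hl : vol w l.leaves ≤ vol w (Finset.univ : Finset V) / 2)
    (hr : vol w r.leaves ≤ vol w (Finset.univ : Finset V) / 2) :
    Φ * ((node l r).leaves.card : ℝ) * vol w (node l r).leaves ≤ 2 * cost w t := by
  set S := (node l r).leaves with hS
  have hd := disjoint_leaves_of_nodup_node (hs.nodup ht.1)
  have hcost : (S.card : ℝ) * (cut w l.leaves r.leaves + cut w S Sᶜ) ≤ cost w t := by
    have hsub := cost_add_card_mul_cut_sdiff_le hw hsymm hs ht.1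
    rw [ht.2, ← Finset.compl_eq_univ_sdiff, cost] at hsub
    have := cost_nonneg hw l
    have := cost_nonneg hw r
    linarith
  have hcond : Φ * vol w S ≤ 2 * (cut w l.leaves r.leaves + cut w S Sᶜ) := by
    have hsum := cut_compl_add_cut_compl w hsymm hd
    rw [← leaves_node, ← hS] at hsum
    have hvol : vol w S = vol w l.leaves + vol w r.leaves := by
      rw [hS, leaves_node]; exact Finset.sum_union hd
    have := hΦ _ (leaves_nonempty l) hl
    have := hΦ _ (leaves_nonempty r) hr
    have := cut_nonneg w hw S Sᶜ
    rw [hvol, mul_add]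
    linarith
  calc Φ * (S.card : ℝ) * vol w S = (S.card : ℝ) * (Φ * vol w S) := by ring
    _ ≤ (S.card : ℝ) * (2 * (cut w l.leaves r.leaves + cut w S Sᶜ)) := by gcongr
    _ ≤ 2 * cost w t := by linarith

end HCTree

open HCTree in
theorem cost_le_eight_opt_div_phi_general {V : Type} [Fintype V] [DecidableEq V]
    (w : V → V → ℝ) (hw : ∀ u v, 0 ≤ w u v) (hsymm : ∀ u v, w u v = w v u)
    (Φ : ℝ) (hΦ0 : 0 < Φ)
    (hΦ : ∀ S : Finset V, S.Nonempty → vol w S ≤ vol w (Finset.univ : Finset V) / 2 →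
      Φ * vol w S ≤ cut w S Sᶜ)
    (Tstar : HCTree V) (hTstar : isHC Tstar)
    (k : ℕ) (A B : ℕ → HCTree V) (hdb : DenseBranch w Tstar k A B)
    (hAk : ((Fintype.card V : ℝ) - 1) / 2 ≤ ((leaves (A k)).card : ℝ))
    (T : HCTree V) (hT : isHC T) :
    cost w T ≤ 8 * cost w Tstar / Φ := by
  obtain ⟨l, r, hAk_node, hl, hr⟩ := hdb.2.2.2
  have hlower := conductance_mul_card_mul_vol_le_two_mul_cost hw hsymm hΦ hTstar
    (hAk_node ▸ hdb.isSubtree) hl hr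
  rw [← hAk_node] at hlower
  have hupper := cost_le_card_mul_vol_div_two hw hsymm hT
  have hcard : (Fintype.card V : ℝ) ≤ 4 * ((leaves (A k)).card : ℝ) := by
    have : (1 : ℝ) ≤ (leaves (A k)).card := by exact_mod_cast (leaves_nonempty (A k)).card_pos
    linarith
  have hvol : vol w Finset.univ / 2 ≤ vol w (leaves (A k)) := (hdb.2.2.1 k le_rfl).le
  have hvol_nonneg : 0 ≤ vol w Finset.univ :=
    Finset.sum_nonneg fun u _ => Finset.sum_nonneg fun v _ => hw u v
  rw [le_div_iff₀ hΦ0]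
  calc cost w T * Φ ≤ (Fintype.card V : ℝ) * (vol w Finset.univ / 2) * Φ := by
        gcongr; linarith
    _ ≤ 4 * ((leaves (A k)).card : ℝ) * vol w (leaves (A k)) * Φ := by gcongr
    _ ≤ 8 * cost w Tstar := by linarith

open HCTree in
/-- Let `G` be a graph of conductance `Φ_G` with `n` vertices and `T*` an
optimal HC tree of `G` whose dense branch is `(A_0, …, A_k)`. If `|A_k| ≥ (n-1)/2`, then
every HC tree `T` of `G` satisfies `cost_G(T) ≤ 8 · cost_G(T*)/Φ_G`. -/
theorem cost_le_eight_opt_div_phi {V : Type} [Fintype V] [DecidableEq V]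
    (w : V → V → ℝ) (hw : ∀ u v, 0 ≤ w u v) (hsymm : ∀ u v, w u v = w v u)
    (Φ : ℝ) (hΦ0 : 0 < Φ)
    (hΦ : ∀ S : Finset V, S.Nonempty → vol w S ≤ vol w (Finset.univ : Finset V) / 2 →
      Φ * vol w S ≤ cut w S Sᶜ)
    (Tstar : HCTree V) (hTstar : isHC Tstar)
    (hopt : ∀ t : HCTree V, isHC t → cost w Tstar ≤ cost w t)
    (k : ℕ) (A B : ℕ → HCTree V) (hdb : DenseBranch w Tstar k A B)
    (hAk : ((Fintype.card V : ℝ) - 1) / 2 ≤ ((leaves (A k)).card : ℝ))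
    (T : HCTree V) (hT : isHC T) :
    cost w T ≤ 8 * cost w Tstar / Φ :=
  cost_le_eight_opt_div_phi_general w hw hsymm Φ hΦ0 hΦ Tstar hTstar k A B hdb hAk T hT
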